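/- Let X be a pointed compact metric space and φ : X → X a base point-preserving continuous map that is not supercontractive. Then there exists f ∈ Lip₀(X) such that f ∘ φ ∉ lip₀(X). -/

import Mathlib

/-!
If `φ` is not supercontractive there are pairs `xₙ ≠ yₙ` with `d(xₙ, yₙ) → 0` and
`d(φ xₙ, φ yₙ) ≥ ε d(xₙ, yₙ)`; by compactness both `xₙ` and `yₙ` may be taken to converge to some
`q`, so the image pairs `uₙ, vₙ` converge to `φ q`. Along a subsequence on which each pair lies
within `1/8` of the previous scale `tₙ = d(uₙ, vₙ)` of `φ q`, the scales decrease geometrically and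
the 1-Lipschitz function `f = supₙ (tₙ / 4 - d(·, wₙ))`, with `wₙ` the point of the `n`-th pair
farther from `φ q`, is `≥ tₙ / 4` at `wₙ` and `≤ tₙ / 16` at the other point. Hence
`|f (φ xₙ) - f (φ yₙ)| ≥ ε d(xₙ, yₙ) / 8` along the subsequence, so `(f - f e) ∘ φ ∉ lip₀(X)`.
-/

/-- A map between metric spaces is supercontractive if
`lim_{d(x,y)→0} d(f x, f y)/d(x,y) = 0`. -/
def IsSupercontractive {X Y : Type*} [MetricSpace X] [MetricSpace Y] (f : X → Y) : Prop :=
  ∀ ε > (0 : ℝ), ∃ δ > (0 : ℝ), ∀ x y : X,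
    0 < dist x y → dist x y < δ → dist (f x) (f y) / dist x y < ε

open Filter Set Topology

theorem exists_strictMono_chain {R : ℕ → ℕ → Prop} (h : ∀ n, ∃ k, n < k ∧ R n k) :
    ∃ m : ℕ → ℕ, StrictMono m ∧ ∀ j, R (m j) (m (j + 1)) := by
  choose next hlt hR using h
  refine ⟨fun j => next^[j] 0, strictMono_nat_of_lt_succ fun j => ?_, fun j => ?_⟩
  · simpa only [Function.iterate_succ_apply'] using hlt _
  · simpa only [Function.iterate_succ_apply'] using hR _

section SupSubDist

variable {ι X : Type*} [PseudoMetricSpace X] {s : ι → ℝ}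

theorem bddAbove_range_sub_dist (hs : BddAbove (range s)) (c : ι → X) (x : X) :
    BddAbove (range fun i => s i - dist x (c i)) := by
  obtain ⟨B, hB⟩ := hs
  refine ⟨B, ?_⟩
  rintro _ ⟨i, rfl⟩
  linarith [hB (mem_range_self i), dist_nonneg (x := x) (y := c i)]

theorem lipschitzWith_one_ciSup_sub_dist [Nonempty ι] (hs : BddAbove (range s)) (c : ι → X) :
    LipschitzWith 1 fun x => ⨆ i, (s i - dist x (c i)) := by
  refine LipschitzWith.of_le_add_mul 1 fun x y => ?_
  refine ciSup_le fun i => ?_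
  have hle := le_ciSup (bddAbove_range_sub_dist hs c y) i
  have htri := dist_triangle y x (c i)
  rw [dist_comm y x] at htri
  simp only [NNReal.coe_one, one_mul]
  linarith

end SupSubDist

theorem exists_lipschitzWith_one_separating_of_chain {X : Type*} [MetricSpace X] {W Z : ℕ → X}
    {p : X} (hpos : ∀ j, 0 < dist (W j) (Z j)) (hfar : ∀ j, dist (Z j) p ≤ dist (W j) p)
    (hchain : ∀ j, dist (W (j + 1)) p ≤ dist (W j) (Z j) / 8) :
    ∃ f : X → ℝ, LipschitzWith 1 f ∧ ∀ j, dist (W j) (Z j) ≤ 8 * (f (W j) - f (Z j)) := by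
  set t := fun j => dist (W j) (Z j)
  have ht_pos : ∀ j, 0 < t j := hpos
  have ht_le : ∀ j, t j ≤ 2 * dist (W j) p := fun j => by
    linarith [dist_triangle_right (W j) (Z j) p, hfar j]
  have ht_succ : ∀ j, t (j + 1) ≤ t j / 4 := fun j => by linarith [ht_le (j + 1), hchain j]
  have ht_anti : Antitone t :=
    antitone_nat_of_succ_le fun j => by linarith [ht_succ j, ht_pos j]
  have ht_lt : ∀ {i j}, i < j → t j ≤ t i / 4 := fun hij =>
    (ht_anti (Nat.succ_le_of_lt hij)).trans (ht_succ _)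
  have hbdd : BddAbove (range fun j => t j / 4) :=
    ⟨t 0 / 4, by rintro _ ⟨j, rfl⟩; linarith [ht_anti (Nat.zero_le j)]⟩
  refine ⟨fun x => ⨆ i, (t i / 4 - dist x (W i)), lipschitzWith_one_ciSup_sub_dist hbdd W,
    fun j => ?_⟩
  have hW : t j / 4 ≤ ⨆ i, (t i / 4 - dist (W j) (W i)) := by
    simpa using le_ciSup (bddAbove_range_sub_dist hbdd W (W j)) j
  have hZ : ⨆ i, (t i / 4 - dist (Z j) (W i)) ≤ t j / 16 := by
    refine ciSup_le fun i => ?_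
    rcases lt_trichotomy i j with hij | rfl | hij
    · -- `Z j` lies much closer to `p` than `W i` does
      obtain ⟨k, rfl⟩ := Nat.exists_eq_add_of_lt hij
      have hZp : dist (Z (i + k + 1)) p ≤ t i / 8 :=
        (hfar _).trans ((hchain _).trans (by linarith [ht_anti (Nat.le_add_right i k)]))
      linarith [dist_triangle (W i) (Z (i + k + 1)) p, ht_le i, dist_comm (W i) (Z (i + k + 1)),
        ht_pos i, ht_pos (i + k + 1)]
    · linarith [dist_comm (Z i) (W i), ht_pos i]
    · linarith [ht_lt hij, dist_nonneg (x := Z j) (y := W i)]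
  linarith [ht_pos j]

theorem exists_lipschitzWith_one_separating {X : Type*} [MetricSpace X] {u v : ℕ → X} {p : X}
    (huv : ∀ n, u n ≠ v n) (hu : Tendsto u atTop (𝓝 p)) (hv : Tendsto v atTop (𝓝 p)) :
    ∃ f : X → ℝ, LipschitzWith 1 f ∧ ∃ m : ℕ → ℕ, StrictMono m ∧
      ∀ j, dist (u (m j)) (v (m j)) ≤ 8 * |f (u (m j)) - f (v (m j))| := by
  have hsort : ∀ n, ∃ w z : X, dist z p ≤ dist w p ∧ (w = u n ∧ z = v n ∨ w = v n ∧ z = u n) :=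
    fun n => by
      rcases le_total (dist (v n) p) (dist (u n) p) with h | h
      exacts [⟨_, _, h, .inl ⟨rfl, rfl⟩⟩, ⟨_, _, h, .inr ⟨rfl, rfl⟩⟩]
  choose W Z hfar hWZ using hsort
  have hpos : ∀ n, 0 < dist (W n) (Z n) := fun n => by
    rcases hWZ n with ⟨hw, hz⟩ | ⟨hw, hz⟩ <;> rw [hw, hz, dist_pos]
    exacts [huv n, (huv n).symm]
  have hW : Tendsto W atTop (𝓝 p) := fun U hU => by
    rw [Filter.mem_map]
    filter_upwards [hu hU, hv hU] with n hun hvn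
    rcases hWZ n with ⟨hw, -⟩ | ⟨hw, -⟩ <;> rw [mem_preimage, hw] <;> assumption
  obtain ⟨m, hm, hchain⟩ := exists_strictMono_chain
    (R := fun i k => dist (W k) p ≤ dist (W i) (Z i) / 8) fun n =>
      ((eventually_gt_atTop n).and
        (hW.eventually (Metric.closedBall_mem_nhds p (by linarith [hpos n])))).exists
  obtain ⟨f, hf, hsep⟩ := exists_lipschitzWith_one_separating_of_chain (W := W ∘ m) (Z := Z ∘ m)
    (fun j => hpos (m j)) (fun j => hfar (m j)) hchain
  refine ⟨f, hf, m, hm, fun j => ?_⟩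
  have hsepj := hsep j
  simp only [Function.comp_apply] at hsepj
  rcases hWZ (m j) with ⟨hw, hz⟩ | ⟨hw, hz⟩ <;> rw [hw, hz] at hsepj
  · exact hsepj.trans (by gcongr; exact le_abs_self _)
  · rw [dist_comm, abs_sub_comm]
    exact hsepj.trans (by gcongr; exact le_abs_self _)

theorem exists_seq_of_not_isSupercontractive {X Y : Type*} [MetricSpace X] [MetricSpace Y]
    {φ : X → Y} (h : ¬ IsSupercontractive φ) :
    ∃ ε > (0 : ℝ), ∃ x y : ℕ → X, (∀ n, 0 < dist (x n) (y n)) ∧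
      Tendsto (fun n => dist (x n) (y n)) atTop (𝓝 0) ∧
      ∀ n, ε * dist (x n) (y n) ≤ dist (φ (x n)) (φ (y n)) := by
  unfold IsSupercontractive at h
  push Not at h
  obtain ⟨ε, hε, hbad⟩ := h
  choose x y hpos hsmall hratio using fun n : ℕ => hbad (1 / (n + 1)) (by positivity)
  refine ⟨ε, hε, x, y, hpos, ?_, fun n => (le_div_iff₀ (hpos n)).1 (hratio n)⟩
  exact squeeze_zero (fun n => dist_nonneg) (fun n => (hsmall n).le)
    tendsto_one_div_add_atTop_nhds_zero_nat

theorem IsSupercontractive.tendsto_div_dist {X Y : Type*} [MetricSpace X] [MetricSpace Y]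
    {g : X → Y} (hg : IsSupercontractive g) {x y : ℕ → X} (hpos : ∀ n, 0 < dist (x n) (y n))
    (hlim : Tendsto (fun n => dist (x n) (y n)) atTop (𝓝 0)) :
    Tendsto (fun n => dist (g (x n)) (g (y n)) / dist (x n) (y n)) atTop (𝓝 0) := by
  refine Metric.tendsto_nhds.2 fun ε hε => ?_
  obtain ⟨δ, hδ, hgδ⟩ := hg ε hε
  filter_upwards [hlim.eventually (gt_mem_nhds hδ)] with n hn
  rw [Real.dist_0_eq_abs, abs_of_nonneg (div_nonneg dist_nonneg dist_nonneg)]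
  exact hgδ _ _ (hpos n) hn

theorem exists_lip0_comp_not_little_general {X : Type*} [MetricSpace X] [CompactSpace X] (e : X)
    (φ : X → X) (hφ : Continuous φ) (h : ¬ IsSupercontractive φ) :
    ∃ f : X → ℝ, (∃ K, LipschitzWith K f) ∧ f e = 0 ∧
      f ∘ φ ∉ {g : X → ℝ | (∃ K, LipschitzWith K g) ∧ IsSupercontractive g ∧ g e = 0} := by
  obtain ⟨ε, hε, x, y, hpos, hlim, hexpand⟩ := exists_seq_of_not_isSupercontractive h
  obtain ⟨q, -, σ, hσ, hxq⟩ := isCompact_univ.tendsto_subseq fun n => mem_univ (x n)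
  have hlimσ := hlim.comp hσ.tendsto_atTop
  have hyq : Tendsto (y ∘ σ) atTop (𝓝 q) := hxq.congr_dist hlimσ
  obtain ⟨f, hf, m, hm, hsep⟩ := exists_lipschitzWith_one_separating
    (fun n => dist_pos.1 ((mul_pos hε (hpos _)).trans_le (hexpand (σ n))))
    ((hφ.tendsto q).comp hxq) ((hφ.tendsto q).comp hyq)
  refine ⟨fun z => f z - f e, ⟨1, ?_⟩, sub_self _, ?_⟩
  · simpa [Function.comp_def] using (IsometryEquiv.subRight (f e)).isometry.lipschitz.comp hf
  rintro ⟨-, hsc, -⟩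
  have hratio := hsc.tendsto_div_dist (fun j => hpos (σ (m j))) (hlimσ.comp hm.tendsto_atTop)
  have hlower : ε / 8 ≤ 0 := ge_of_tendsto' hratio fun j => (le_div_iff₀ (hpos _)).2 (by
    simp only [Function.comp_apply, Real.dist_eq, sub_sub_sub_cancel_right] at hsep ⊢
    linarith [hsep j, hexpand (σ (m j))])
  linarith

/-- If `φ` is a base point-preserving continuous self-map of a pointed compact metric space
(base point `e`) which is not supercontractive, then there is `f ∈ Lip₀(X)` with
`f ∘ φ ∉ lip₀(X)`. -/
theorem exists_lip0_comp_not_little {X : Type*} [MetricSpace X] [CompactSpace X] (e : X)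
    (φ : X → X) (hφ : Continuous φ) (hb : φ e = e) (h : ¬ IsSupercontractive φ) :
    ∃ f : X → ℝ, (∃ K, LipschitzWith K f) ∧ f e = 0 ∧
      f ∘ φ ∉ {g : X → ℝ | (∃ K, LipschitzWith K g) ∧ IsSupercontractive g ∧ g e = 0} :=
  exists_lip0_comp_not_little_general e φ hφ h
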